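/- arXiv:2506.22142 — 5 statements merged into one kernel-verified Lean document; each statement's English description precedes it below -/
import Mathlib

section
/- Let c: ℝ → ℝ be strictly convex, twice differentiable, c(0)=0, c'(0)=0, k ≥ 0, and let δ_min ∈ (0,∞] be the minimizer of c̄(q)=(k+c(q))/q on (0,∞). Fix P > 0 and τ ∈ [0,1/2). Define ψ(δ) = -P(1-2τ)(c̄(δ) - c'(δ))/δ + τ·c'(δ) (the derivative of the trimmed-mean manipulation cost). Then ψ is negative on (0, δ*(τ)) and positive on (δ*(τ), ∞) for a unique δ*(τ) ∈ (0, δ_min), provided τ > 0; i.e., ψ has a unique sign change. -/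
open Set

/-- For `τ ∈ (0, 1/2)`, the derivative
`ψ(δ) = -P*(1-2τ)*(c̄ δ - c' δ)/δ + τ * c' δ` of the trimmed-mean manipulation
cost has a unique sign change at some `δ*(τ) ∈ (0, δmin)`: it is negative on
`(0, δ*(τ))` and positive on `(δ*(τ), ∞)`. -/
theorem stmt_4 (c : ℝ → ℝ) (k P τ : ℝ)
    (hconv : StrictConvexOn ℝ Set.univ c)
    (hdiff : Differentiable ℝ c) (hdiff2 : Differentiable ℝ (deriv c))
    (hc0 : c 0 = 0) (hc'0 : deriv c 0 = 0) (hk : 0 ≤ k) (hP : 0 < P)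
    (hτ : τ ∈ Set.Ico (0:ℝ) (1/2)) (hτpos : 0 < τ)
    (cbar : ℝ → ℝ) (hcbar : ∀ q, cbar q = (k + c q) / q)
    (δmin : ℝ) (hδpos : 0 < δmin)
    (hmin : ∀ q, 0 < q → cbar δmin ≤ cbar q)
    (ψ : ℝ → ℝ)
    (hψ : ∀ δ, ψ δ = -(P * (1 - 2 * τ)) * (cbar δ - deriv c δ) / δ + τ * deriv c δ) :
    ∃! δstar : ℝ, δstar ∈ Set.Ioo 0 δmin ∧
      (∀ δ, 0 < δ → δ < δstar → ψ δ < 0) ∧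
      (∀ δ, δstar < δ → 0 < ψ δ) := by
  set A := P * (1 - 2 * τ) with hAdef
  have hApos : 0 < A := mul_pos hP (by have := hτ.2; linarith)
  -- deriv c strictly monotone
  have hmono : StrictMono (deriv c) := by
    have := hconv.strictMonoOn_deriv (fun x _ => hdiff.differentiableAt)
    intro x y hxy
    exact this (mem_univ x) (mem_univ y) hxy
  have hc'pos : ∀ δ : ℝ, 0 < δ → 0 < deriv c δ := fun δ hδ => by
    have := hmono hδ; rwa [hc'0] at this
  -- tangent line inequality for a < b : c'(b)*(a-b) < c a - c b
  have htang : ∀ a b : ℝ, a < b → deriv c b * (a - b) < c a - c b := by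
    intro a b hab
    have := hconv.slope_lt_deriv (mem_univ a) (mem_univ b) hab hdiff.differentiableAt
    rw [slope_def_field] at this
    have hba : 0 < b - a := by linarith
    rw [div_lt_iff₀ hba] at this
    nlinarith
  -- k > 0
  have hkpos : 0 < k := by
    rcases hk.lt_or_eq with hlt | heq
    · exact hlt
    · exfalso
      have hne : (0:ℝ) ≠ δmin := ne_of_lt hδpos
      have hcv := hconv.2 (mem_univ (0:ℝ)) (mem_univ δmin) hne
        (by norm_num : (0:ℝ) < 1/2) (by norm_num : (0:ℝ) < 1/2) (by norm_num)
      simp only [smul_eq_mul, mul_zero, zero_add, hc0] at hcv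
      have hq : (0:ℝ) < 1/2 * δmin := by positivity
      have hle := hmin (1/2 * δmin) hq
      rw [hcbar, hcbar, ← heq, zero_add, zero_add, div_le_div_iff₀ hδpos hq] at hle
      nlinarith
  -- define h and F
  set h : ℝ → ℝ := fun δ => k + c δ - δ * deriv c δ with hhdef
  set F : ℝ → ℝ := fun δ => -A * h δ + τ * δ ^ 2 * deriv c δ with hFdef
  -- h strictly antitone on Ioi 0
  have hanti : ∀ a b : ℝ, 0 < a → a < b → h b < h a := by
    intro a b ha hab
    have h1 := htang a b hab
    have h2 := hmono hab
    simp only [hhdef]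
    nlinarith
  -- F strictly monotone on Ioi 0
  have hFmono : ∀ a b : ℝ, 0 < a → a < b → F a < F b := by
    intro a b ha hab
    have h1 := hanti a b ha hab
    have h2 := hmono hab
    have h3 := hc'pos a ha
    have hb : 0 < b := ha.trans hab
    have hsq : a ^ 2 < b ^ 2 := by nlinarith
    have h4 : a ^ 2 * deriv c a < b ^ 2 * deriv c b :=
      mul_lt_mul'' hsq h2 (sq_nonneg a) h3.le
    have h5 : τ * (a ^ 2 * deriv c a) < τ * (b ^ 2 * deriv c b) :=
      mul_lt_mul_of_pos_left h4 hτpos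
    have h6 : -A * h a < -A * h b := by nlinarith
    simp only [hFdef]
    nlinarith [h5, h6]
  -- F is continuous
  have hFcont : Continuous F := by
    apply Continuous.add
    · exact (continuous_const.mul ((continuous_const.add hdiff.continuous).sub
        (continuous_id.mul hdiff2.continuous)))
    · exact (continuous_const.mul (continuous_pow 2)).mul hdiff2.continuous
  -- h δmin = 0 via local min of cbar
  have hδmin0 : h δmin = 0 := by
    have hloc : IsLocalMin cbar δmin := by
      have hmem : Ioi (0:ℝ) ∈ nhds δmin := Ioi_mem_nhds hδpos
      exact Filter.eventually_of_mem hmem (fun q hq => hmin q hq)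
    have hfun : cbar = fun q => (k + c q) / q := funext hcbar
    have hd : HasDerivAt cbar ((deriv c δmin * δmin - (k + c δmin) * 1) / δmin ^ 2) δmin := by
      rw [hfun]
      exact ((hdiff.differentiableAt.hasDerivAt).const_add k).div (hasDerivAt_id δmin)
        (ne_of_gt hδpos)
    have hz := hloc.hasDerivAt_eq_zero hd
    have hne : δmin ^ 2 ≠ 0 := by positivity
    rw [div_eq_zero_iff] at hz
    simp only [hhdef]
    rcases hz with h' | h'
    · nlinarith
    · exact absurd h' hne
  -- F δmin > 0
  have hFδmin : 0 < F δmin := by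
    simp only [hFdef, hδmin0, mul_zero, neg_mul, neg_zero, zero_add]
    have := hc'pos δmin hδpos
    positivity
  -- F 0 < 0
  have hF0 : F 0 < 0 := by
    have hF0eq : F 0 = -A * k := by
      simp [hFdef, hhdef, hc0]
    rw [hF0eq]
    nlinarith
  -- find a > 0 with F a < 0
  have hev : ∀ᶠ x in nhds (0:ℝ), F x < 0 :=
    (hFcont.continuousAt (x := 0)).eventually_lt continuousAt_const hF0
  obtain ⟨a, haF, ha⟩ := ((hev.filter_mono nhdsWithin_le_nhds).and
    (eventually_mem_nhdsWithin (s := Ioi (0:ℝ)) (a := 0))).exists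
  have hapos : 0 < a := ha
  have haδ : a < δmin := by
    by_contra hcon
    push_neg at hcon
    rcases eq_or_lt_of_le hcon with h' | h'
    · rw [h'] at hFδmin; linarith
    · have := hFmono δmin a hδpos h'; linarith
  -- IVT
  obtain ⟨δstar, hδstarmem, hFδstar⟩ :=
    intermediate_value_Icc haδ.le hFcont.continuousOn ⟨haF.le, hFδmin.le⟩
  have hδstarpos : 0 < δstar := lt_of_lt_of_le hapos hδstarmem.1
  have hδstarlt : δstar < δmin := by
    by_contra hcon
    push_neg at hcon
    rcases eq_or_lt_of_le hcon with h' | h'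
    · rw [h'] at hFδmin; linarith
    · have := hFmono δmin δstar hδpos h'; linarith
  -- ψ δ = F δ / δ^2 for δ > 0
  have hψF : ∀ δ : ℝ, 0 < δ → ψ δ = F δ / δ ^ 2 := by
    intro δ hδ
    rw [hψ, hcbar]
    simp only [hFdef, hhdef]
    field_simp
  have hsign1 : ∀ δ : ℝ, 0 < δ → (F δ < 0 ↔ ψ δ < 0) := by
    intro δ hδ
    rw [hψF δ hδ]
    have h2 : (0:ℝ) < δ ^ 2 := by positivity
    constructor
    · intro hx; exact div_neg_of_neg_of_pos hx h2
    · intro hx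
      rcases div_neg_iff.mp hx with ⟨_, hb⟩ | ⟨ha', _⟩
      · linarith
      · exact ha'
  have hsign2 : ∀ δ : ℝ, 0 < δ → (0 < F δ ↔ 0 < ψ δ) := by
    intro δ hδ
    rw [hψF δ hδ]
    exact (div_pos_iff_of_pos_right (by positivity)).symm
  refine ⟨δstar, ⟨⟨hδstarpos, hδstarlt⟩, ?_, ?_⟩, ?_⟩
  · intro δ hδ hδlt
    have hlt : F δ < F δstar := hFmono δ δstar hδ hδlt
    rw [hFδstar] at hlt
    exact (hsign1 δ hδ).mp hlt
  · intro δ hδ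
    have hδ0 : 0 < δ := lt_trans hδstarpos hδ
    have hlt : F δstar < F δ := hFmono δstar δ hδstarpos hδ
    rw [hFδstar] at hlt
    exact (hsign2 δ hδ0).mp hlt
  · rintro y ⟨⟨hy1, hy2⟩, hyneg, hypos⟩
    by_contra hne
    rcases lt_or_gt_of_ne hne with hlt | hgt
    · set m := (y + δstar) / 2 with hmdef
      have hm1 : y < m := by rw [hmdef]; linarith
      have hm2 : m < δstar := by rw [hmdef]; linarith
      have hmpos : 0 < m := lt_trans hy1 hm1
      have hp := hypos m hm1
      have h2 : F m < F δstar := hFmono m δstar hmpos hm2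
      rw [hFδstar] at h2
      have := (hsign2 m hmpos).mpr hp
      linarith
    · set m := (δstar + y) / 2 with hmdef
      have hm1 : δstar < m := by rw [hmdef]; linarith
      have hm2 : m < y := by rw [hmdef]; linarith
      have hmpos : 0 < m := lt_trans hδstarpos hm1
      have hp := hyneg m hmpos hm2
      have h2 : F δstar < F m := hFmono δstar m hδstarpos hm1
      rw [hFδstar] at h2
      have := (hsign1 m hmpos).mpr hp
      linarith
end

section
/- Let F be a probability distribution on ℝ symmetric around 0 with a continuous single-peaked density f that is strictly decreasing where positive on [0,∞), and let P > 0. There exists a Markov kernel G^c(·|p) on ℝ with: (i) G^c(·|p) = δ_p (no movement) for p ≥ P; (ii) for p < P, G^c(·|p) moves only mass to [P, ∞); (iii) the total mass moved is F(P) - 1/2; and (iv) the pushforward distribution G(A) = ∫ G^c(A|p) dF(p) has density g̃(y) = (f(y) + f(y-2P))/2, which is symmetric around P. -/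
/-!
At a point `p < P` keep the fraction `g̃ p / f p` of the mass, which is at most `1` because
`|p - 2P| ≥ |p|` and `f` is even and unimodal, and send the rest to `[P, ∞)`, distributed
proportionally to `g̃ - f ≥ 0` there. Since `g̃` averages `f` with its mirror image in `P`, both
have total mass `1`, so the excess of `g̃` over `f` on `[P, ∞)` equals the deficit on `(-∞, P)`;
and the deficit is `F P - 1/2` because the symmetric `g̃` puts half its mass below `P`.
-/

open Set MeasureTheory ProbabilityTheory

namespace ProbabilityTheory.Kernel

variable {α : Type*} [MeasurableSpace α]

noncomputable def stayOrJump (β : α → ℝ) (hβ : Measurable β) (ν : Measure α) : Kernel α α where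
  toFun p := ENNReal.ofReal (β p) • Measure.dirac p + ENNReal.ofReal (1 - β p) • ν
  measurable' := Measure.measurable_of_measurable_coe _ fun s hs => by
    simp only [Measure.add_apply, Measure.smul_apply, smul_eq_mul, Measure.dirac_apply' _ hs]
    fun_prop

variable {β : α → ℝ} {hβ : Measurable β} {ν : Measure α}

lemma stayOrJump_apply (p : α) :
    stayOrJump β hβ ν p = ENNReal.ofReal (β p) • Measure.dirac p + ENNReal.ofReal (1 - β p) • ν :=
  rfl

lemma isMarkovKernel_stayOrJump [IsProbabilityMeasure ν] (h0 : ∀ p, 0 ≤ β p) (h1 : ∀ p, β p ≤ 1) :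
    IsMarkovKernel (stayOrJump β hβ ν) where
  isProbabilityMeasure p := ⟨by
    simp [stayOrJump_apply, ← ENNReal.ofReal_add (h0 p) (sub_nonneg.2 (h1 p))]⟩

lemma stayOrJump_apply_real [IsFiniteMeasure ν] (h0 : ∀ p, 0 ≤ β p) (h1 : ∀ p, β p ≤ 1)
    {A : Set α} (hA : MeasurableSet A) (p : α) :
    (stayOrJump β hβ ν p A).toReal = β p * A.indicator 1 p + (1 - β p) * ν.real A := by
  have h1' : 0 ≤ 1 - β p := sub_nonneg.2 (h1 p)
  by_cases hp : p ∈ A <;>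
    simp [stayOrJump_apply, Measure.dirac_apply' _ hA, hp, measureReal_def,
      ENNReal.toReal_add ENNReal.ofReal_ne_top
        (ENNReal.mul_ne_top ENNReal.ofReal_ne_top (measure_ne_top ν A)), h0 p, h1']

end ProbabilityTheory.Kernel

section Retention

variable {α : Type*} {f g : α → ℝ} {S : Set α}

open Classical in
noncomputable def retention (f g : α → ℝ) (S : Set α) (p : α) : ℝ :=
  if p ∈ S then g p / f p else 1

lemma measurable_retention [MeasurableSpace α] (hS : MeasurableSet S) (hf : Measurable f)
    (hg : Measurable g) : Measurable (retention f g S) :=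
  Measurable.ite hS (hg.div hf) measurable_const

lemma retention_nonneg (hf0 : 0 ≤ f) (hg0 : 0 ≤ g) (p : α) : 0 ≤ retention f g S p := by
  unfold retention; split_ifs
  exacts [div_nonneg (hg0 p) (hf0 p), zero_le_one]

lemma retention_le_one (hf0 : 0 ≤ f) (hgf : ∀ x ∈ S, g x ≤ f x) (p : α) :
    retention f g S p ≤ 1 := by
  unfold retention; split_ifs with hp
  exacts [div_le_one_of_le₀ (hgf p hp) (hf0 p), le_rfl]

lemma mul_retention (hg0 : 0 ≤ g) (hgf : ∀ x ∈ S, g x ≤ f x) (p : α) :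
    f p * retention f g S p = g p - Sᶜ.indicator (g - f) p := by
  unfold retention; split_ifs with hp
  · rw [indicator_of_notMem (notMem_compl_iff.2 hp), sub_zero]
    exact mul_div_cancel_of_imp' fun h => le_antisymm (h ▸ hgf p hp) (hg0 p)
  · simp [indicator_of_mem (mem_compl hp)]

lemma mul_stayOrJump_retention_real [MeasurableSpace α] {ν : Measure α} [IsFiniteMeasure ν]
    (hS : MeasurableSet S) (hf : Measurable f) (hg : Measurable g) (hf0 : 0 ≤ f) (hg0 : 0 ≤ g)
    (hgf : ∀ x ∈ S, g x ≤ f x) {A : Set α} (hA : MeasurableSet A) (p : α) :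
    f p * (Kernel.stayOrJump (retention f g S) (measurable_retention hS hf hg) ν p A).toReal
      = A.indicator (g - Sᶜ.indicator (g - f)) p + ν.real A * S.indicator (f - g) p := by
  rw [Kernel.stayOrJump_apply_real (retention_nonneg hf0 hg0) (retention_le_one hf0 hgf) hA,
    mul_add]
  simp only [← mul_assoc]
  rw [mul_sub, mul_one, mul_retention hg0 hgf]
  by_cases hp : p ∈ A <;> by_cases hpS : p ∈ S <;> simp [hp, hpS, mul_comm]

end Retention

section Transport

variable {α : Type*} [MeasurableSpace α] {ρ : Measure α}

lemma withDensity_ofReal_apply_of_nonneg {h : α → ℝ} (hint : Integrable h ρ) (hnn : 0 ≤ h)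
    {A : Set α} (hA : MeasurableSet A) :
    ρ.withDensity (fun x => ENNReal.ofReal (h x)) A = ENNReal.ofReal (∫ x in A, h x ∂ρ) := by
  rw [withDensity_apply _ hA,
    ofReal_integral_eq_lintegral_ofReal hint.integrableOn (ae_of_all _ hnn)]

lemma integral_withDensity_ofReal {h : α → ℝ} (hh : Measurable h) (hnn : 0 ≤ h) (φ : α → ℝ) :
    ∫ x, φ x ∂ρ.withDensity (fun x => ENNReal.ofReal (h x)) = ∫ x, h x * φ x ∂ρ := by
  rw [integral_withDensity_eq_integral_toReal_smul (by fun_prop)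
    (ae_of_all _ fun _ => ENNReal.ofReal_lt_top)]
  simp_rw [ENNReal.toReal_ofReal (hnn _), smul_eq_mul]

lemma integral_indicator_compl_sub {f g : α → ℝ} {S : Set α} (hS : MeasurableSet S)
    (hf_int : Integrable f ρ) (hg_int : Integrable g ρ) (hmass : ∫ x, f x ∂ρ = ∫ x, g x ∂ρ) :
    ∫ x, Sᶜ.indicator (g - f) x ∂ρ = ∫ x in S, (f x - g x) ∂ρ := by
  have hsplit := integral_add_compl hS (hf_int.sub hg_int)
  simp only [Pi.sub_apply] at hsplit
  rw [integral_sub hf_int hg_int, hmass, sub_self] at hsplit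
  have hneg : ∫ x in Sᶜ, (g - f) x ∂ρ = -∫ x in Sᶜ, (f x - g x) ∂ρ := by
    rw [← integral_neg]; simp
  rw [integral_indicator hS.compl, hneg]
  linarith

theorem exists_isMarkovKernel_transport [MeasurableSingletonClass α] [NullSingletonClass ρ]
    {f g : α → ℝ} {S : Set α} (hS : MeasurableSet S) (hf : Measurable f) (hg : Measurable g)
    (hf_int : Integrable f ρ) (hg_int : Integrable g ρ) (hf0 : 0 ≤ f) (hg0 : 0 ≤ g)
    (hgf : ∀ x ∈ S, g x ≤ f x) (hfg : ∀ x ∉ S, f x ≤ g x)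
    (hmass : ∫ x, f x ∂ρ = ∫ x, g x ∂ρ) (hmoved : 0 < ∫ x in S, (f x - g x) ∂ρ) :
    ∃ κ : Kernel α α, IsMarkovKernel κ ∧ (∀ p ∉ S, κ p = Measure.dirac p) ∧
      (∀ p, κ p (S \ {p}) = 0) ∧
      ∫ p, (κ p {p}ᶜ).toReal ∂ρ.withDensity (fun x => ENNReal.ofReal (f x))
        = ∫ x in S, (f x - g x) ∂ρ ∧
      ∀ A, MeasurableSet A → ∫ p, (κ p A).toReal ∂ρ.withDensity (fun x => ENNReal.ofReal (f x))
        = ∫ x in A, g x ∂ρ := by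
  set m := ∫ x in S, (f x - g x) ∂ρ
  set e := Sᶜ.indicator (g - f)
  have he0 : 0 ≤ e := indicator_nonneg fun x hx => sub_nonneg.2 (hfg x hx)
  have he_int : Integrable e ρ := (hg_int.sub hf_int).indicator hS.compl
  set ν := ρ.withDensity fun x => ENNReal.ofReal (e x / m)
  have hν_apply : ∀ A, MeasurableSet A → ν A = ENNReal.ofReal ((∫ x in A, e x ∂ρ) / m) :=
    fun A hA => by
      rw [withDensity_ofReal_apply_of_nonneg (he_int.div_const m)
        (fun x => div_nonneg (he0 x) hmoved.le) hA, integral_div]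
  have : IsProbabilityMeasure ν := ⟨by
    rw [hν_apply _ MeasurableSet.univ, setIntegral_univ,
      integral_indicator_compl_sub hS hf_int hg_int hmass, div_self hmoved.ne', ENNReal.ofReal_one]⟩
  have hν_S : ν S = 0 := by
    rw [hν_apply S hS, setIntegral_eq_zero_of_forall_eq_zero fun x hx =>
      indicator_of_notMem (notMem_compl_iff.2 hx) _]
    simp
  have hν_atom : ∀ p, ν {p} = 0 := fun p =>
    withDensity_absolutelyContinuous _ _ (measure_singleton p)
  set κ := Kernel.stayOrJump (retention f g S) (measurable_retention hS hf hg) ν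
  refine ⟨κ, Kernel.isMarkovKernel_stayOrJump (retention_nonneg hf0 hg0)
    (retention_le_one hf0 hgf), fun p hp => ?_, fun p => ?_, ?_, fun A hA => ?_⟩
  · simp [κ, Kernel.stayOrJump_apply, retention, hp]
  · simp [κ, Kernel.stayOrJump_apply, measure_mono_null sdiff_subset hν_S]
  · have hmoved_at : ∀ p, f p * (κ p {p}ᶜ).toReal = S.indicator (f - g) p := fun p => by
      rw [mul_stayOrJump_retention_real hS hf hg hf0 hg0 hgf (measurableSet_singleton p).compl,
        probReal_compl_eq_one_sub (measurableSet_singleton p), measureReal_def, hν_atom]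
      simp
    simp_rw [integral_withDensity_ofReal hf hf0, hmoved_at, integral_indicator hS]
    rfl
  · rw [integral_withDensity_ofReal hf hf0, integral_congr_ae
        (ae_of_all _ (mul_stayOrJump_retention_real hS hf hg hf0 hg0 hgf hA)),
      integral_add ((hg_int.sub he_int).indicator hA)
        (((hf_int.sub hg_int).indicator hS).const_mul _), integral_const_mul,
      integral_indicator hA, integral_indicator hS, measureReal_def, hν_apply A hA,
      ENNReal.toReal_ofReal (div_nonneg (setIntegral_nonneg hA fun x _ => he0 x) hmoved.le)]
    simp only [Pi.sub_apply]
    rw [integral_sub hg_int.integrableOn he_int.integrableOn]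
    field_simp
    ring

end Transport

section SymmetricUnimodal

variable {f : ℝ → ℝ}

lemma le_of_abs_le_abs_of_even (hsym : ∀ x, f (-x) = f x) (hanti : AntitoneOn f (Ici 0))
    {x y : ℝ} (hxy : |x| ≤ |y|) : f y ≤ f x := by
  have habs : ∀ z, f |z| = f z := fun z => by rcases abs_choice z with h | h <;> simp [h, hsym]
  rw [← habs x, ← habs y]
  exact hanti (abs_nonneg x) ((abs_nonneg x).trans hxy) hxy

lemma pos_of_even_of_antitoneOn (hsym : ∀ x, f (-x) = f x) (hanti : AntitoneOn f (Ici 0))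
    (hf0 : ∀ x, 0 ≤ f x) (hf_one : ∫ x, f x = 1) : 0 < f 0 := by
  refine (hf0 0).lt_of_ne fun h => ?_
  have : f = 0 := funext fun x =>
    le_antisymm ((le_of_abs_le_abs_of_even hsym hanti (by simp)).trans h.ge) (hf0 x)
  simp [this] at hf_one

lemma integral_Iio_eq_half_of_symm {g : ℝ → ℝ} {c : ℝ} (hg : Integrable g)
    (hsym : ∀ x, g (c + x) = g (c - x)) : ∫ x in Iio c, g x = (∫ x, g x) / 2 := by
  have hrefl : ∫ x in Ioi c, g x = ∫ x in Iio c, g x := by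
    have h := (Measure.measurePreserving_sub_left volume (2 * c)).setIntegral_preimage_emb
      (MeasurableEquiv.subLeft (2 * c)).measurableEmbedding g (Iio c)
    have hpre : (fun x => 2 * c - x) ⁻¹' Iio c = Ioi c := by
      ext x; simp only [mem_preimage, mem_Iio, mem_Ioi]; constructor <;> intro <;> linarith
    rw [hpre] at h
    rw [← h]
    refine setIntegral_congr_fun measurableSet_Ioi fun x _ => ?_
    simpa [show c + (x - c) = x by ring, show c - (x - c) = 2 * c - x by ring] using hsym (x - c)
  have := intervalIntegral.integral_Iic_add_Ioi (b := c) hg.integrableOn hg.integrableOn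
  rw [integral_Iic_eq_integral_Iio, hrefl] at this
  linarith

lemma integral_Iio_lt_integral_Iio {a b : ℝ} (hab : a < b) (hf_cont : Continuous f)
    (hf_int : Integrable f) (hf0 : ∀ x, 0 ≤ f x) (ha : f a ≠ 0) :
    ∫ x in Iio a, f x < ∫ x in Iio b, f x := by
  have hnonempty : (Function.support f ∩ Ioo a b).Nonempty :=
    mem_closure_iff_nhds.mp (by rw [closure_Ioo hab.ne]; exact left_mem_Icc.2 hab.le) _
      (hf_cont.isOpen_support.mem_nhds ha)
  have hpos : 0 < ∫ x in a..b, f x := by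
    rw [intervalIntegral.integral_pos_iff_support_of_nonneg_ae (ae_of_all _ hf0)
      hf_int.intervalIntegrable]
    exact ⟨hab, (measure_mono (inter_subset_inter_right _ Ioo_subset_Ioc_self)).trans_lt'
      ((hf_cont.isOpen_support.inter isOpen_Ioo).measure_pos volume hnonempty)⟩
  rw [← intervalIntegral.integral_Iic_sub_Iic hf_int.integrableOn hf_int.integrableOn,
    integral_Iic_eq_integral_Iio, integral_Iic_eq_integral_Iio] at hpos
  linarith

lemma half_lt_integral_Iio (hsym : ∀ x, f (-x) = f x) (hanti : AntitoneOn f (Ici 0))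
    (hf_cont : Continuous f) (hf_int : Integrable f) (hf0 : ∀ x, 0 ≤ f x)
    (hf_one : ∫ x, f x = 1) {P : ℝ} (hP : 0 < P) : 1 / 2 < ∫ x in Iio P, f x := by
  have hf_half : ∫ x in Iio 0, f x = 1 / 2 := by
    rw [integral_Iio_eq_half_of_symm hf_int fun x => by simp [hsym], hf_one]
  rw [← hf_half]
  exact integral_Iio_lt_integral_Iio hP hf_cont hf_int hf0
    (pos_of_even_of_antitoneOn hsym hanti hf0 hf_one).ne'

lemma apply_sub_two_mul_le (hsym : ∀ x, f (-x) = f x) (hanti : AntitoneOn f (Ici 0)) {P p : ℝ}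
    (hP : 0 ≤ P) (hp : p ≤ P) : f (p - 2 * P) ≤ f p :=
  le_of_abs_le_abs_of_even hsym hanti (sq_le_sq.1 (by nlinarith))

lemma le_apply_sub_two_mul (hsym : ∀ x, f (-x) = f x) (hanti : AntitoneOn f (Ici 0)) {P p : ℝ}
    (hP : 0 ≤ P) (hp : P ≤ p) : f p ≤ f (p - 2 * P) :=
  le_of_abs_le_abs_of_even hsym hanti (sq_le_sq.1 (by nlinarith))

end SymmetricUnimodal

theorem stmt_11_general (f : ℝ → ℝ) (F : ℝ → ℝ) (P : ℝ) (hP : 0 < P)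
    (hf_nonneg : ∀ x, 0 ≤ f x) (hf_cont : Continuous f) (hf_int : Integrable f)
    (hf_one : ∫ x, f x = 1)
    (hf_sym : ∀ x, f (-x) = f x)
    (hf_anti : AntitoneOn f (Set.Ici 0))
    (hF : ∀ x, F x = ∫ y in Set.Iic x, f y)
    (μ : Measure ℝ) (hμ : μ = volume.withDensity (fun y => ENNReal.ofReal (f y)))
    (gt : ℝ → ℝ) (hgt : ∀ y, gt y = (f y + f (y - 2 * P)) / 2) :
    ∃ κ : Kernel ℝ ℝ, IsMarkovKernel κ ∧
      (∀ p, P ≤ p → κ p = Measure.dirac p) ∧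
      (∀ p, p < P → κ p (Set.Iio P \ {p}) = 0) ∧
      (∫ p, (κ p {p}ᶜ).toReal ∂μ = F P - 1 / 2) ∧
      (∀ A : Set ℝ, MeasurableSet A →
        ∫ p, (κ p A).toReal ∂μ = ∫ y in A, gt y) ∧
      (∀ x, gt (P + x) = gt (P - x)) := by
  obtain rfl : gt = fun y => (f y + f (y - 2 * P)) / 2 := funext hgt
  subst hμ
  have hgt_int : Integrable fun y => (f y + f (y - 2 * P)) / 2 :=
    (hf_int.add (hf_int.comp_sub_right _)).div_const 2
  have hgt_symm (x : ℝ) :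
      (f (P + x) + f (P + x - 2 * P)) / 2 = (f (P - x) + f (P - x - 2 * P)) / 2 := by
    rw [show P + x - 2 * P = -(P - x) by ring, show P - x - 2 * P = -(P + x) by ring,
      hf_sym, hf_sym, add_comm]
  have hgt_mass : ∫ y, f y = ∫ y, (f y + f (y - 2 * P)) / 2 := by
    rw [integral_div, integral_add hf_int (hf_int.comp_sub_right _), integral_sub_right_eq_self]
    ring
  have hmoved : ∫ y in Iio P, (f y - (f y + f (y - 2 * P)) / 2) = F P - 1 / 2 := by
    rw [integral_sub hf_int.integrableOn hgt_int.integrableOn,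
      integral_Iio_eq_half_of_symm hgt_int hgt_symm, ← hgt_mass, hf_one, hF,
      integral_Iic_eq_integral_Iio]
  have hhalf_lt : 1 / 2 < F P := by
    rw [hF, integral_Iic_eq_integral_Iio]
    exact half_lt_integral_Iio hf_sym hf_anti hf_cont hf_int hf_nonneg hf_one hP
  obtain ⟨κ, hκ, h_stay, h_jump, h_moved, h_push⟩ :=
    exists_isMarkovKernel_transport measurableSet_Iio hf_cont.measurable (by fun_prop)
      hf_int hgt_int hf_nonneg
      (fun y => div_nonneg (add_nonneg (hf_nonneg y) (hf_nonneg _)) zero_le_two)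
      (fun p hp => by linarith [apply_sub_two_mul_le hf_sym hf_anti hP.le (le_of_lt hp)])
      (fun p hp => by linarith [le_apply_sub_two_mul hf_sym hf_anti hP.le (not_lt.1 hp)])
      hgt_mass (by rw [hmoved]; linarith)
  exact ⟨κ, hκ, fun p hp => h_stay p (not_lt.2 hp), fun p _ => h_jump p, h_moved.trans hmoved,
    h_push, hgt_symm⟩

/-- For a symmetric single-peaked density `f` (strictly decreasing
where positive on `[0,∞)`) with distribution `μ` and cdf `F`, and `P > 0`, there
is a Markov kernel that (i) leaves every price `p ≥ P` unmoved, (ii) from `p < P`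
moves mass only to `[P,∞)`, (iii) moves total mass `F P - 1/2`, and (iv) whose
induced final distribution has density `g̃ y = (f y + f (y - 2P))/2`, symmetric
around `P`. -/
theorem stmt_11 (f : ℝ → ℝ) (F : ℝ → ℝ) (P : ℝ) (hP : 0 < P)
    (hf_nonneg : ∀ x, 0 ≤ f x) (hf_cont : Continuous f) (hf_int : Integrable f)
    (hf_one : ∫ x, f x = 1)
    (hf_sym : ∀ x, f (-x) = f x)
    (hf_anti : AntitoneOn f (Set.Ici 0)) (hf_mono : MonotoneOn f (Set.Iic 0))
    (hf_strict : ∀ x y, 0 ≤ x → x < y → 0 < f y → f y < f x)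
    (hF : ∀ x, F x = ∫ y in Set.Iic x, f y)
    (μ : Measure ℝ) (hμ : μ = volume.withDensity (fun y => ENNReal.ofReal (f y)))
    (gt : ℝ → ℝ) (hgt : ∀ y, gt y = (f y + f (y - 2 * P)) / 2) :
    ∃ κ : Kernel ℝ ℝ, IsMarkovKernel κ ∧
      (∀ p, P ≤ p → κ p = Measure.dirac p) ∧
      (∀ p, p < P → κ p (Set.Iio P \ {p}) = 0) ∧
      (∫ p, (κ p {p}ᶜ).toReal ∂μ = F P - 1 / 2) ∧
      (∀ A : Set ℝ, MeasurableSet A →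
        ∫ p, (κ p A).toReal ∂μ = ∫ y in A, gt y) ∧
      (∀ x, gt (P + x) = gt (P - x)) :=
  stmt_11_general f F P hP hf_nonneg hf_cont hf_int hf_one hf_sym hf_anti hF μ hμ gt hgt
end

section
/- Let F be symmetric around 0 with continuous cdf, let the benchmark be the median, and suppose manipulation has zero variable cost and fixed cost k > 0 per unit mass of prices moved. For target P > 0, the minimum cost to make the median of the final distribution equal to P is k·(F(P) - 1/2). -/
/-!
Lower bound: each point of `(-∞, P)` is either moved or keeps its mass below `P`, so the
displaced mass is at least `μ(-∞, P) - (μ.bind κ)(-∞, P) ≥ F(P) - 1/2` whenever `P` is a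
median of the final distribution. Upper bound: moving exactly the mass of `[0, P)` to `P` leaves
`μ(-∞, 0) = 1/2` below `P` (by symmetry and continuity of `F`) and costs `F(P) - 1/2`.
-/

open Set MeasureTheory ProbabilityTheory

section MovedMass

variable {α : Type*} [MeasurableSpace α]

lemma measure_le_lintegral_compl_singleton_add_bind (μ : Measure α) (κ : Kernel α α)
    [IsMarkovKernel κ] {s : Set α} (hs : MeasurableSet s) :
    μ s ≤ ∫⁻ p, κ p {p}ᶜ ∂μ + μ.bind κ s := by
  have stay_or_move : ∀ p ∈ s, 1 ≤ κ p {p}ᶜ + κ p s := fun p hp =>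
    calc 1 = κ p ({p}ᶜ ∪ {p}) := by rw [compl_union_self, measure_univ]
      _ ≤ κ p {p}ᶜ + κ p {p} := measure_union_le _ _
      _ ≤ κ p {p}ᶜ + κ p s := by gcongr; exact singleton_subset_iff.2 hp
  rw [Measure.bind_apply hs κ.aemeasurable]
  calc μ s = ∫⁻ _ in s, 1 ∂μ := (setLIntegral_one s).symm
    _ ≤ ∫⁻ p in s, (κ p {p}ᶜ + κ p s) ∂μ := setLIntegral_mono' hs stay_or_move
    _ = ∫⁻ p in s, κ p {p}ᶜ ∂μ + ∫⁻ p in s, κ p s ∂μ :=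
        lintegral_add_right _ (κ.measurable_coe hs)
    _ ≤ ∫⁻ p, κ p {p}ᶜ ∂μ + ∫⁻ p, κ p s ∂μ :=
        add_le_add (setLIntegral_le_lintegral _ _) (setLIntegral_le_lintegral _ _)

variable [MeasurableEq α]

lemma measurable_kernel_compl_singleton (κ : Kernel α α) [IsSFiniteKernel κ] :
    Measurable fun p => κ p {p}ᶜ := by
  convert Kernel.measurable_kernel_prodMk_left (κ := κ) (measurableSet_diagonal (α := α)).compl
    using 3 with p
  ext q
  simp [eq_comm]

lemma measureReal_sub_measureReal_bind_le_integral (μ : Measure α) [IsFiniteMeasure μ]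
    (κ : Kernel α α) [IsMarkovKernel κ] {s : Set α} (hs : MeasurableSet s) :
    μ.real s - (μ.bind κ).real s ≤ ∫ p, (κ p {p}ᶜ).toReal ∂μ := by
  rw [integral_toReal (measurable_kernel_compl_singleton κ).aemeasurable
    (.of_forall fun _ => measure_lt_top _ _), sub_le_iff_le_add]
  have moved_ne_top : ∫⁻ p, κ p {p}ᶜ ∂μ ≠ ⊤ :=
    ne_top_of_le_ne_top (measure_ne_top μ univ) <|
      (lintegral_mono fun _ => prob_le_one).trans_eq lintegral_one
  rw [measureReal_def, measureReal_def, ← ENNReal.toReal_add moved_ne_top (measure_ne_top _ _)]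
  exact ENNReal.toReal_mono (ENNReal.add_ne_top.2 ⟨moved_ne_top, measure_ne_top _ _⟩)
    (measure_le_lintegral_compl_singleton_add_bind μ κ hs)

end MovedMass

namespace ProbabilityTheory.Kernel

variable {α : Type*} [MeasurableSpace α] {s : Set α} (hs : MeasurableSet s) (b : α)

open scoped Classical in
noncomputable def moveTo : Kernel α α :=
  piecewise hs (const α (Measure.dirac b)) Kernel.id

instance : IsMarkovKernel (moveTo hs b) := by
  unfold moveTo; infer_instance

open scoped Classical in
lemma moveTo_apply (p : α) :
    moveTo hs b p = if p ∈ s then Measure.dirac b else Measure.dirac p := by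
  simp [moveTo, piecewise_apply, Kernel.id_apply]

lemma bind_moveTo_apply (μ : Measure α) {t : Set α} (ht : MeasurableSet t) :
    μ.bind (moveTo hs b) t = μ s * t.indicator 1 b + μ (t \ s) := by
  rw [Measure.bind_apply ht (Kernel.aemeasurable _), ← lintegral_add_compl _ hs]
  congr 1
  · rw [setLIntegral_congr_fun hs fun p hp => by rw [moveTo_apply, if_pos hp],
      MeasureTheory.setLIntegral_const, Measure.dirac_apply' _ ht, mul_comm]
  · rw [setLIntegral_congr_fun hs.compl (g := t.indicator 1) fun p hp => by
        rw [moveTo_apply, if_neg hp, Measure.dirac_apply' _ ht],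
      lintegral_indicator_one ht, Measure.restrict_apply ht, sdiff_eq]

lemma bind_moveTo_apply_of_notMem (μ : Measure α) {t : Set α} (ht : MeasurableSet t)
    (hb : b ∉ t) : μ.bind (moveTo hs b) t = μ (t \ s) := by
  simp [bind_moveTo_apply hs b μ ht, hb]

lemma bind_moveTo_apply_of_subset (μ : Measure α) {t : Set α} (ht : MeasurableSet t)
    (hst : s ⊆ t) (hb : b ∈ t) : μ.bind (moveTo hs b) t = μ t := by
  rw [bind_moveTo_apply hs b μ ht, indicator_of_mem hb, Pi.one_apply, mul_one,
    measure_add_sdiff hs.nullMeasurableSet, union_eq_right.2 hst]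

lemma toReal_moveTo_apply_compl_singleton [MeasurableSingletonClass α] (hb : b ∉ s)
    (p : α) : (moveTo hs b p {p}ᶜ).toReal = s.indicator 1 p := by
  by_cases hp : p ∈ s
  · have : b ≠ p := fun h => hb (h ▸ hp)
    simp [moveTo_apply, hp, this]
  · simp [moveTo_apply, hp]

lemma integral_moveTo_compl_singleton [MeasurableSingletonClass α] (μ : Measure α)
    (hb : b ∉ s) : ∫ p, (moveTo hs b p {p}ᶜ).toReal ∂μ = μ.real s := by
  simp_rw [toReal_moveTo_apply_compl_singleton hs b hb, integral_indicator_one hs]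

end ProbabilityTheory.Kernel

section Symmetric

variable {μ : Measure ℝ}

lemma measure_Ici_eq_measure_Iic_neg (hsym : Measure.map (fun x => -x) μ = μ) (a : ℝ) :
    μ (Ici a) = μ (Iic (-a)) := by
  conv_lhs => rw [← hsym]
  rw [Measure.map_apply measurable_neg measurableSet_Ici]
  congr 1
  ext x
  simp

variable [IsProbabilityMeasure μ] [NullSingletonClass μ]

lemma measure_Iio_zero_eq_half (hsym : Measure.map (fun x => -x) μ = μ) :
    μ (Iio 0) = 2⁻¹ := by
  have halves : μ (Iio 0) + μ (Iio 0) = 1 := by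
    calc μ (Iio 0) + μ (Iio 0) = μ (Iio 0) + μ (Ici 0) := by
          rw [measure_Ici_eq_measure_Iic_neg hsym, neg_zero, measure_congr Iio_ae_eq_Iic]
      _ = 1 := by rw [← compl_Iio, measure_add_measure_compl measurableSet_Iio, measure_univ]
  rw [← one_div, ENNReal.eq_div_iff two_ne_zero ENNReal.ofNat_ne_top, two_mul, halves]

lemma measure_Iic_zero_eq_half (hsym : Measure.map (fun x => -x) μ = μ) :
    μ (Iic 0) = 2⁻¹ := by
  rw [← measure_congr Iio_ae_eq_Iic, measure_Iio_zero_eq_half hsym]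

end Symmetric

section Median

variable {μ : Measure ℝ} [IsProbabilityMeasure μ] [NullSingletonClass μ]

lemma measureReal_Iic_sub_half_le_integral (κ : Kernel ℝ ℝ) [IsMarkovKernel κ] {P : ℝ}
    (h : μ.bind κ (Iio P) ≤ 2⁻¹) :
    μ.real (Iic P) - 1/2 ≤ ∫ p, (κ p {p}ᶜ).toReal ∂μ := by
  have bind_le : (μ.bind κ).real (Iio P) ≤ 1/2 := by
    rw [measureReal_def, one_div, ← ENNReal.toReal_ofNat, ← ENNReal.toReal_inv]
    exact ENNReal.toReal_mono (by simp) h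
  rw [← measureReal_congr Iio_ae_eq_Iic]
  linarith [measureReal_sub_measureReal_bind_le_integral μ κ (measurableSet_Iio (a := P))]

lemma measureReal_Ico_zero_eq_sub_half (hsym : Measure.map (fun x => -x) μ = μ) {P : ℝ}
    (hP : 0 ≤ P) :
    μ.real (Ico 0 P) = μ.real (Iic P) - 1/2 := by
  have half : μ.real (Iio 0) = 1/2 := by
    rw [measureReal_def, measure_Iio_zero_eq_half hsym]; norm_num
  rw [← measureReal_congr Iio_ae_eq_Iic, ← Iio_union_Ico_eq_Iio hP,
    measureReal_union ((Iio_disjoint_Ici le_rfl).mono_right Ico_subset_Ici_self)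
      measurableSet_Ico, half]
  ring

end Median

/-- With zero variable cost and fixed cost `k > 0` per unit mass
moved, for a symmetric atomless distribution `μ` and target `P > 0`, the minimal
cost over Markov-kernel strategies making `P` a median of the final distribution
`μ.bind κ` equals `k * (F P - 1/2)`, where `F P = μ(-∞, P]`. -/
theorem stmt_14 (μ : Measure ℝ) [IsProbabilityMeasure μ]
    (hsym : Measure.map (fun x => -x) μ = μ)
    (hatomless : ∀ x : ℝ, μ {x} = 0)
    (k P : ℝ) (hk : 0 < k) (hP : 0 < P) :
    sInf {x : ℝ | ∃ κ : Kernel ℝ ℝ, IsMarkovKernel κ ∧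
        (μ.bind κ) (Set.Iio P) ≤ ENNReal.ofReal (1/2) ∧
        ENNReal.ofReal (1/2) ≤ (μ.bind κ) (Set.Iic P) ∧
        x = k * ∫ p, ((κ p) {p}ᶜ).toReal ∂μ} =
      k * ((μ (Set.Iic P)).toReal - 1/2) := by
  have : NullSingletonClass μ := ⟨hatomless⟩
  have half : ENNReal.ofReal (1/2) = 2⁻¹ := by
    rw [one_div, ENNReal.ofReal_inv_of_pos two_pos, ENNReal.ofReal_ofNat]
  have hP_notMem : P ∉ Ico 0 P := fun h => lt_irrefl P h.2
  have below_zero : Iio P \ Ico 0 P = Iio 0 := by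
    rw [← Iio_union_Ico_eq_Iio hP.le, union_sdiff_right,
      ((Iio_disjoint_Ici le_rfl).mono_right Ico_subset_Ici_self).sdiff_eq_left]
  have hs : MeasurableSet (Ico 0 P) := measurableSet_Ico
  refine IsLeast.csInf_eq ⟨⟨Kernel.moveTo hs P, inferInstance, ?_, ?_, ?_⟩, ?_⟩
  · rw [Kernel.bind_moveTo_apply_of_notMem hs P μ measurableSet_Iio (lt_irrefl P),
      below_zero, measure_Iio_zero_eq_half hsym, half]
  · rw [Kernel.bind_moveTo_apply_of_subset hs P μ measurableSet_Iic
      (Ico_subset_Iio_self.trans Iio_subset_Iic_self) self_mem_Iic, half,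
      ← measure_Iic_zero_eq_half hsym]
    exact measure_mono (Iic_subset_Iic.2 hP.le)
  · rw [Kernel.integral_moveTo_compl_singleton hs P μ hP_notMem,
      measureReal_Ico_zero_eq_sub_half hsym hP.le, measureReal_def]
  · rintro _ ⟨κ, hκ, hIio, -, rfl⟩
    exact mul_le_mul_of_nonneg_left (measureReal_Iic_sub_half_le_integral κ (half ▸ hIio)) hk.le
end

section
/- Let I be a finite index set, μ_i > 0 weights with Σ μ_i = 1, and c_i: ℝ → ℝ strictly convex differentiable with c_i(0)=0, c_i'(P) > 0. Consider: minimize Σ_i μ_i c_i(δ_i) subject to Σ_i (c_i'(P)/Σ_j c_j'(P) μ_j) μ_i δ_i = P. Then δ_i = P for all i is the unique solution. -/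
open Set Finset

/-- Strict tangent line inequality for strictly convex differentiable functions. -/
lemma tangent_lt {f : ℝ → ℝ} (hf : StrictConvexOn ℝ Set.univ f)
    (hd : Differentiable ℝ f) {x y : ℝ} (hxy : y ≠ x) :
    f x + deriv f x * (y - x) < f y := by
  rcases lt_or_gt_of_ne hxy with h | h
  · have := hf.slope_lt_deriv (mem_univ y) (mem_univ x) h (hd x)
    rw [slope_def_field, div_lt_iff₀ (by linarith : 0 < x - y)] at this
    linarith
  · have := hf.deriv_lt_slope (mem_univ x) (mem_univ y) h (hd x)
    rw [slope_def_field, lt_div_iff₀ (by linarith : 0 < y - x)] at this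
    linarith

/-- Heterogeneous markets with no fixed costs: minimizing
`Σ_i μ_i c_i(δ_i)` subject to the weighted-mean constraint
`Σ_i (c_i'(P)/Σ_j c_j'(P) μ_j) μ_i δ_i = P` has `δ_i = P` for all `i` as its
unique solution. -/
theorem stmt_16 (I : Type*) [Fintype I] [Nonempty I]
    (μ : I → ℝ) (hμpos : ∀ i, 0 < μ i) (hμsum : ∑ i, μ i = 1)
    (c : I → ℝ → ℝ)
    (hconv : ∀ i, StrictConvexOn ℝ Set.univ (c i))
    (hdiff : ∀ i, Differentiable ℝ (c i))
    (hc0 : ∀ i, c i 0 = 0)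
    (P : ℝ) (hP : 0 < P)
    (hc' : ∀ i, 0 < deriv (c i) P) :
    (∑ i, (deriv (c i) P / ∑ j, deriv (c j) P * μ j) * μ i * P = P) ∧
    ∀ δ : I → ℝ,
      (∑ i, (deriv (c i) P / ∑ j, deriv (c j) P * μ j) * μ i * δ i = P) →
      δ ≠ (fun _ => P) →
      ∑ i, μ i * c i P < ∑ i, μ i * c i (δ i) := by
  set S := ∑ j, deriv (c j) P * μ j with hS
  have hSpos : 0 < S := Finset.sum_pos (fun j _ => mul_pos (hc' j) (hμpos j))
    Finset.univ_nonempty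
  have hfeas : ∑ i, (deriv (c i) P / S) * μ i * P = P := by
    have : ∑ i, (deriv (c i) P / S) * μ i * P = (∑ i, deriv (c i) P * μ i) * P / S := by
      rw [Finset.sum_mul, Finset.sum_div]
      exact Finset.sum_congr rfl (fun i _ => by ring)
    rw [this, ← hS, mul_comm, mul_div_assoc, div_self hSpos.ne', mul_one]
  refine ⟨hfeas, fun δ hδ hne => ?_⟩
  -- rewrite constraint: ∑ μ i * deriv (c i) P * δ i = P * S
  have hcon : ∑ i, μ i * deriv (c i) P * δ i = P * S := by
    have h1 : ∑ i, (deriv (c i) P / S) * μ i * δ i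
        = (∑ i, μ i * deriv (c i) P * δ i) / S := by
      rw [Finset.sum_div]; exact Finset.sum_congr rfl (fun i _ => by ring)
    rw [h1] at hδ
    field_simp at hδ
    linarith
  have hconP : ∑ i, μ i * deriv (c i) P * P = P * S := by
    rw [hS, Finset.mul_sum]
    exact Finset.sum_congr rfl (fun i _ => by ring)
  obtain ⟨i0, hi0⟩ : ∃ i, δ i ≠ P := by
    by_contra h; push_neg at h; exact hne (funext h)
  have key : ∑ i, (μ i * c i P + μ i * deriv (c i) P * (δ i - P)) < ∑ i, μ i * c i (δ i) := by
    refine Finset.sum_lt_sum (fun i _ => ?_) ⟨i0, Finset.mem_univ i0, ?_⟩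
    · rcases eq_or_ne (δ i) P with h | h
      · rw [h]; ring_nf; exact le_refl _
      · have := tangent_lt (hconv i) (hdiff i) h
        nlinarith [(hμpos i).le, hμpos i]
    · have := tangent_lt (hconv i0) (hdiff i0) hi0
      nlinarith [hμpos i0]
  have hsum : ∑ i, (μ i * c i P + μ i * deriv (c i) P * (δ i - P)) = ∑ i, μ i * c i P := by
    rw [Finset.sum_add_distrib]
    have : ∑ i, μ i * deriv (c i) P * (δ i - P) = 0 := by
      have : ∑ i, μ i * deriv (c i) P * (δ i - P)
          = (∑ i, μ i * deriv (c i) P * δ i) - ∑ i, μ i * deriv (c i) P * P := by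
        rw [← Finset.sum_sub_distrib]
        exact Finset.sum_congr rfl (fun i _ => by ring)
      rw [this, hcon, hconP, sub_self]
    rw [this, add_zero]
  linarith [hsum ▸ key]
end

section
/- Let F have a density f symmetric around 0 and single-peaked, P > 0, and define the kernel: for y ≥ P, keep the price at y; for y < P with f(y) > 0, keep mass α(y) = (f(y)+f(y-2P))/(2f(y)) at y and distribute mass 1 - α(y) over [P, ∞) with density x ↦ (g̃(x) - f(x))/A(y), where g̃(x) = (f(x)+f(x-2P))/2 and A(y) = (∫_P^∞ (f(z-2P)-f(z))/2 dz)/(1-α(y)). Then the resulting final density at each x ≥ P equals f(x) + ∫_{-∞}^P ((g̃(x)-f(x))/A(y)) f(y) dy = g̃(x). -/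
open Set MeasureTheory

lemma shift_Iic (g : ℝ → ℝ) (a c : ℝ) :
    (∫ x in Set.Iic c, g (x + a)) = ∫ x in Set.Iic (c + a), g x := by
  have A : MeasurableEmbedding (fun x : ℝ => x + a) :=
    (Homeomorph.addRight a).isClosedEmbedding.measurableEmbedding
  have h := A.setIntegral_map (μ := volume) g (Set.Iic (c + a))
  rw [map_add_right_eq_self volume a] at h
  have hpre : (fun x : ℝ => x + a) ⁻¹' Set.Iic (c + a) = Set.Iic c := by
    ext x; simp [Set.mem_Iic]
  rw [hpre] at h
  exact h.symm

/-- Density identity verifying the median-optimality construction: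
with `g̃ x = (f x + f (x - 2P))/2`, `α y = (f y + f (y-2P))/(2 f y)` and
`A y = (∫_P^∞ (f (z-2P) - f z)/2 dz)/(1 - α y)`, the final density at every
`x ≥ P` satisfies `f x + ∫_{-∞}^P ((g̃ x - f x)/A y) f y dy = g̃ x`. -/
theorem stmt_19 (f : ℝ → ℝ) (P : ℝ) (hP : 0 < P)
    (hf_nonneg : ∀ x, 0 ≤ f x) (hf_int : Integrable f)
    (hf_one : ∫ x, f x = 1)
    (hf_sym : ∀ x, f (-x) = f x)
    (hf_anti : AntitoneOn f (Set.Ici 0)) (hf_mono : MonotoneOn f (Set.Iic 0))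
    (hf_strict : ∀ x y, 0 ≤ x → x < y → 0 < f y → f y < f x)
    (gt α A : ℝ → ℝ)
    (hgt : ∀ x, gt x = (f x + f (x - 2 * P)) / 2)
    (hα : ∀ y, α y = (f y + f (y - 2 * P)) / (2 * f y))
    (hA : ∀ y, A y = (∫ z in Set.Ioi P, (f (z - 2 * P) - f z) / 2) / (1 - α y))
    (hDpos : 0 < ∫ z in Set.Ioi P, (f (z - 2 * P) - f z) / 2) :
    ∀ x, P ≤ x →
      f x + ∫ y in Set.Iic P, ((gt x - f x) / A y) * f y = gt x := by
  intro x hx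
  set D : ℝ := ∫ z in Set.Ioi P, (f (z - 2 * P) - f z) / 2 with hD_def
  have hD : D ≠ 0 := ne_of_gt hDpos
  set c : ℝ := gt x - f x with hc
  -- f (y - 2P) ≤ f y for y ≤ P
  have hle : ∀ y : ℝ, y ≤ P → f (y - 2 * P) ≤ f y := by
    intro y hy
    have hsym' : f (y - 2 * P) = f (2 * P - y) := by
      rw [← hf_sym (2 * P - y)]; ring_nf
    rw [hsym']
    rcases le_or_gt 0 y with h0 | h0
    · have h1 : y ≤ 2 * P - y := by linarith
      exact hf_anti (Set.mem_Ici.mpr h0) (Set.mem_Ici.mpr (by linarith)) h1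
    · have : f (2 * P - y) ≤ f (-y) :=
        hf_anti (Set.mem_Ici.mpr (by linarith)) (Set.mem_Ici.mpr (by linarith))
          (by linarith)
      rwa [hf_sym y] at this
  -- pointwise identity on Iic P
  have key : ∀ y ∈ Set.Iic P,
      ((gt x - f x) / A y) * f y = (c / D) * ((f y - f (y - 2 * P)) / 2) := by
    intro y hy
    rw [hA y, hα y, ← hc]
    set a := f y with ha
    set b := f (y - 2 * P) with hb
    rcases eq_or_lt_of_le (hf_nonneg y) with h0 | h0
    · -- f y = 0, hence f (y - 2P) = 0
      have hb0 : b = 0 := le_antisymm (h0 ▸ hle y hy) (hf_nonneg _)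
      simp [show a = 0 from h0.symm, hb0]
    · have ha0 : a ≠ 0 := ne_of_gt h0
      have h1 : 1 - (a + b) / (2 * a) = (a - b) / (2 * a) := by
        field_simp; ring
      rw [h1]
      rcases eq_or_ne a b with hab | hab
      · simp [hab, hD_def]
      · have hab' : a - b ≠ 0 := sub_ne_zero.mpr hab
        rw [div_div_eq_mul_div]
        field_simp
  rw [setIntegral_congr_fun measurableSet_Iic key, integral_const_mul]
  -- change of variables: D = ∫_{Iic P} (f y - f (y-2P))/2
  have hsub : D = ∫ y in Set.Iic P, (f y - f (y - 2 * P)) / 2 := by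
    have e : (-P : ℝ) + 2 * P = P := by ring
    calc D = ∫ z in Set.Ioi P,
            (fun t => (f (t + 2 * P) - f (t + 2 * P - 2 * P)) / 2) (-z) := by
          rw [hD_def]
          refine setIntegral_congr_fun measurableSet_Ioi (fun z _ => ?_)
          show (f (z - 2 * P) - f z) / 2
              = (f (-z + 2 * P) - f (-z + 2 * P - 2 * P)) / 2
          rw [show (-z + 2 * P - 2 * P) = -z by ring, hf_sym,
            show (-z + 2 * P) = -(z - 2 * P) by ring, hf_sym]
      _ = ∫ t in Set.Iic (-P), (f (t + 2 * P) - f (t + 2 * P - 2 * P)) / 2 := by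
          exact integral_comp_neg_Ioi P fun t => (f (t + 2 * P) - f (t + 2 * P - 2 * P)) / 2
      _ = ∫ y in Set.Iic (-P + 2 * P), (f y - f (y - 2 * P)) / 2 :=
          shift_Iic (fun y => (f y - f (y - 2 * P)) / 2) (2 * P) (-P)
      _ = ∫ y in Set.Iic P, (f y - f (y - 2 * P)) / 2 := by rw [e]
  rw [← hsub, div_mul_cancel₀ _ hD, hc]
  ring
end
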